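/- arXiv:2211.08184 — 3 statements merged into one kernel-verified Lean document; each statement's English description precedes it below -/
import Mathlib

section
/- Let P = {p_1,...,p_n} ⊆ ℝ^d be a finite set of vectors and s ∈ ℝ^d. For any ε ∈ (0,1), there exists a subset U ⊆ P with |U| ≤ ⌈ε^{-2}⌉ + 1 such that, letting Π be the orthogonal projection onto the span of U, for all p ∈ P it holds that |⟨p, (I−Π)s⟩| ≤ ε · ‖(I−Π)p‖ · min_{q∈P} ‖q − s‖. -/
/-! Greedy argument. Start from the point `q ∈ P` nearest to `s`, so that the residual
`(I - Π) s` has norm at most `m = min_{q ∈ P} ‖q - s‖`. As long as some `p ∈ P` violates the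
bound, add it to `U`: with `w = (I - Π) p` and `r = (I - Π) s`, the new span contains
`Π s + (⟪w, r⟫ / ‖w‖²) • w`, so `‖r‖²` drops by `⟪p, r⟫² / ‖w‖² > ε² m²`. Hence after
`⌈ε⁻²⌉` additions the residual vanishes and every `p` satisfies the bound. -/

open EuclideanSpace

open Finset Submodule

open scoped RealInnerProductSpace

section

variable {E : Type*} [NormedAddCommGroup E] [InnerProductSpace ℝ E]

theorem Submodule.norm_sub_starProjection_le_of_mem (K : Submodule ℝ E)
    [K.HasOrthogonalProjection] (x : E) {v : E} (hv : v ∈ K) :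
    ‖x - K.starProjection x‖ ≤ ‖x - v‖ := by
  rw [starProjection_minimal]
  exact ciInf_le ⟨0, Set.forall_mem_range.2 fun _ => norm_nonneg _⟩ (⟨v, hv⟩ : K)

theorem Submodule.inner_sub_starProjection_eq (K : Submodule ℝ E) [K.HasOrthogonalProjection]
    (p x : E) :
    ⟪p, x - K.starProjection x⟫ = ⟪p - K.starProjection p, x - K.starProjection x⟫ := by
  rw [inner_sub_left, real_inner_comm (x - K.starProjection x) (K.starProjection p),
    K.starProjection_inner_eq_zero x _ (K.starProjection_apply_mem p), sub_zero]

theorem norm_sub_smul_sq_eq (r w : E) :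
    ‖r - (⟪w, r⟫ / ‖w‖ ^ 2) • w‖ ^ 2 = ‖r‖ ^ 2 - ⟪w, r⟫ ^ 2 / ‖w‖ ^ 2 := by
  rcases eq_or_ne w 0 with rfl | hw
  · simp
  have : ‖w‖ ≠ 0 := norm_ne_zero_iff.2 hw
  rw [norm_sub_sq_real, norm_smul, real_inner_smul_right, real_inner_comm, Real.norm_eq_abs,
    mul_pow, sq_abs]
  field_simp
  ring

theorem Submodule.norm_sub_starProjection_sq_le_of_le {K K' : Submodule ℝ E}
    [K.HasOrthogonalProjection] [K'.HasOrthogonalProjection] (hKK' : K ≤ K') {p : E}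
    (hp : p ∈ K') (x : E) :
    ‖x - K'.starProjection x‖ ^ 2 ≤
      ‖x - K.starProjection x‖ ^ 2 -
        ⟪p, x - K.starProjection x⟫ ^ 2 / ‖p - K.starProjection p‖ ^ 2 := by
  set r := x - K.starProjection x
  set w := p - K.starProjection p
  have hv : K.starProjection x + (⟪w, r⟫ / ‖w‖ ^ 2) • w ∈ K' :=
    K'.add_mem (hKK' (K.starProjection_apply_mem x))
      (K'.smul_mem _ (K'.sub_mem hp (hKK' (K.starProjection_apply_mem p))))
  calc ‖x - K'.starProjection x‖ ^ 2
      ≤ ‖x - (K.starProjection x + (⟪w, r⟫ / ‖w‖ ^ 2) • w)‖ ^ 2 := by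
        gcongr; exact K'.norm_sub_starProjection_le_of_mem x hv
    _ = ‖r - (⟪w, r⟫ / ‖w‖ ^ 2) • w‖ ^ 2 := by rw [sub_add_eq_sub_sub]
    _ = _ := by rw [norm_sub_smul_sq_eq, K.inner_sub_starProjection_eq p x]

theorem Submodule.norm_sub_starProjection_sq_add_sq_lt {K K' : Submodule ℝ E}
    [K.HasOrthogonalProjection] [K'.HasOrthogonalProjection] (hKK' : K ≤ K') {p : E}
    (hp : p ∈ K') (x : E) {c : ℝ} (hc : 0 ≤ c)
    (hpx : c * ‖p - K.starProjection p‖ < |⟪p, x - K.starProjection x⟫|) :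
    ‖x - K'.starProjection x‖ ^ 2 + c ^ 2 < ‖x - K.starProjection x‖ ^ 2 := by
  have hw : 0 < ‖p - K.starProjection p‖ := by
    by_contra! h
    rw [K.inner_sub_starProjection_eq, norm_le_zero_iff.1 h] at hpx
    simp at hpx
  have : c ^ 2 < ⟪p, x - K.starProjection x⟫ ^ 2 / ‖p - K.starProjection p‖ ^ 2 := by
    rw [lt_div_iff₀ (by positivity), ← mul_pow, ← sq_abs ⟪p, _⟫]
    gcongr
  linarith [norm_sub_starProjection_sq_le_of_le hKK' hp x]

theorem exists_subset_card_le_abs_inner_sub_starProjection_le (P U : Finset E) (hUP : U ⊆ P)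
    (s : E) {c : ℝ} (hc : 0 ≤ c) (k : ℕ)
    (hk : ‖s - (span ℝ (U : Set E)).starProjection s‖ ^ 2 ≤ k * c ^ 2) :
    ∃ V ⊆ P, #V ≤ #U + k ∧ ∀ p ∈ P,
      |⟪p, s - (span ℝ (V : Set E)).starProjection s⟫| ≤
        c * ‖p - (span ℝ (V : Set E)).starProjection p‖ := by
  induction k generalizing U with
  | zero =>
    refine ⟨U, hUP, le_rfl, fun p _ => ?_⟩
    have : s - (span ℝ (U : Set E)).starProjection s = 0 := by
      simpa using (show ‖s - (span ℝ (U : Set E)).starProjection s‖ ^ 2 ≤ 0 by simpa using hk)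
    rw [this, inner_zero_right, abs_zero]
    positivity
  | succ k ih =>
    by_cases hU : ∀ p ∈ P, |⟪p, s - (span ℝ (U : Set E)).starProjection s⟫| ≤
        c * ‖p - (span ℝ (U : Set E)).starProjection p‖
    · exact ⟨U, hUP, by omega, hU⟩
    push Not at hU
    obtain ⟨p, hpP, hp⟩ := hU
    classical
    have hdecrease := norm_sub_starProjection_sq_add_sq_lt
      (span_mono (by simp : (U : Set E) ⊆ ↑(insert p U))) (subset_span (by simp)) s hc hp
    obtain ⟨V, hVP, hV, hVgood⟩ :=
      ih (insert p U) (insert_subset hpP hUP) (by push_cast at hk; linarith)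
    exact ⟨V, hVP, by linarith [card_insert_le p U], hVgood⟩

end

theorem stmt_0 {d : ℕ} (P : Finset (EuclideanSpace ℝ (Fin d))) (hP : P.Nonempty)
    (s : EuclideanSpace ℝ (Fin d)) (ε : ℝ) (hε : ε ∈ Set.Ioo (0:ℝ) 1) :
    ∃ U : Finset (EuclideanSpace ℝ (Fin d)), U ⊆ P ∧ U.card ≤ ⌈ε⁻¹ ^ 2⌉₊ + 1 ∧
      ∀ p ∈ P,
        |(inner ℝ p (s - (Submodule.orthogonalProjectionOnto (Submodule.span ℝ (U : Set (EuclideanSpace ℝ (Fin d)))) s :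
            EuclideanSpace ℝ (Fin d))) : ℝ)| ≤
          ε * ‖p - (Submodule.orthogonalProjectionOnto (Submodule.span ℝ (U : Set (EuclideanSpace ℝ (Fin d)))) p :
            EuclideanSpace ℝ (Fin d))‖ * P.inf' hP (fun q => ‖q - s‖) := by
  obtain ⟨q, hqP, hq⟩ := exists_mem_eq_inf' hP (fun q => ‖q - s‖)
  set m := P.inf' hP (fun q => ‖q - s‖)
  have hε0 : 0 < ε := hε.1
  have hstart :
      ‖s - (span ℝ (({q} : Finset _) : Set (EuclideanSpace ℝ (Fin d)))).starProjection s‖ ^ 2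
        ≤ ⌈ε⁻¹ ^ 2⌉₊ * (ε * m) ^ 2 :=
    calc _ ≤ ‖s - q‖ ^ 2 := by
          gcongr; exact norm_sub_starProjection_le_of_mem _ s (subset_span (by simp))
      _ = ε⁻¹ ^ 2 * (ε * m) ^ 2 := by rw [norm_sub_rev, hq]; field_simp
      _ ≤ _ := by gcongr; exact Nat.le_ceil _
  obtain ⟨V, hVP, hVcard, hV⟩ := exists_subset_card_le_abs_inner_sub_starProjection_le P {q}
    (singleton_subset_iff.2 hqP) s (mul_nonneg hε0.le (hq ▸ norm_nonneg _)) _ hstart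
  refine ⟨V, hVP, by simpa [add_comm] using hVcard, fun p hp => ?_⟩
  simpa [mul_right_comm] using hV p hp
end

section
/- For all integers k ≥ 1, all integers k_i with 1 ≤ k_i ≤ k, all reals x ≥ 8 (playing the role of 2^i), and z ∈ {1,2}: min(k_i, x) · (k · k_i · x^{z−1}) / (k + k_i · x)² ≤ C · k^{z/(z+2)} for an absolute constant C. -/
theorem stmt_6 :
    ∃ C : ℝ, 0 < C ∧
      ∀ (k ki z : ℕ) (x : ℝ), 1 ≤ k → 1 ≤ ki → ki ≤ k → 8 ≤ x → (z = 1 ∨ z = 2) →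
        min (ki : ℝ) x * ((k : ℝ) * ki * x ^ (z - 1)) / ((k : ℝ) + ki * x) ^ 2 ≤
          C * (k : ℝ) ^ ((z : ℝ) / ((z : ℝ) + 2)) := by
  refine ⟨1, one_pos, ?_⟩
  intro k ki z x hk hki hkik hx hz
  have hk1 : (1:ℝ) ≤ k := by exact_mod_cast hk
  have hki1 : (1:ℝ) ≤ ki := by exact_mod_cast hki
  have hx0 : (0:ℝ) < x := by linarith
  have hk0 : (0:ℝ) < k := by linarith
  have hki0 : (0:ℝ) < ki := by linarith
  have hA0 : (0:ℝ) ≤ min (ki:ℝ) x := le_min (by linarith) hx0.le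
  have hAle : min (ki:ℝ) x ≤ x := min_le_right _ _
  have hD : (0:ℝ) < ((k:ℝ) + ki * x) ^ 2 := by positivity
  rcases hz with rfl | rfl
  · -- z = 1
    have h2 : (1:ℝ) ≤ (k:ℝ) ^ (((1:ℕ):ℝ) / (((1:ℕ):ℝ) + 2)) :=
      Real.one_le_rpow hk1 (by norm_num)
    have h1 : min (ki:ℝ) x * ((k:ℝ) * ki * x ^ (1 - 1)) / ((k:ℝ) + ki * x) ^ 2 ≤ 1 := by
      rw [div_le_one hD]
      have hmul : min (ki:ℝ) x * ((k:ℝ) * ki * x ^ (1-1)) ≤ (k:ℝ) * ki * x := by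
        simp only [Nat.sub_self, pow_zero, mul_one]
        nlinarith [mul_le_mul_of_nonneg_right hAle (by positivity : (0:ℝ) ≤ (k:ℝ)*ki)]
      nlinarith [sq_nonneg ((k:ℝ) - ki * x)]
    linarith
  · -- z = 2
    have hs : Real.sqrt k * Real.sqrt k = (k:ℝ) := Real.mul_self_sqrt hk0.le
    have hs1 : (1:ℝ) ≤ Real.sqrt k := by
      rw [show (1:ℝ) = Real.sqrt 1 by simp]
      exact Real.sqrt_le_sqrt hk1
    have hrpow : (k:ℝ) ^ (((2:ℕ):ℝ) / (((2:ℕ):ℝ) + 2)) = Real.sqrt k := by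
      rw [Real.sqrt_eq_rpow]
      norm_num
    rw [hrpow, one_mul, div_le_iff₀ hD]
    set s := Real.sqrt k with hsdef
    set r := Real.sqrt ((ki:ℝ) * x) with hrdef
    have hr : r * r = (ki:ℝ) * x := Real.mul_self_sqrt (by positivity)
    have hr0 : 0 < r := Real.sqrt_pos.mpr (by positivity)
    have hs0 : 0 < s := by linarith
    have hAr : min (ki:ℝ) x ≤ r := by
      apply Real.le_sqrt_of_sq_le
      have h1 : min (ki:ℝ) x ≤ (ki:ℝ) := min_le_left _ _
      nlinarith
    -- goal: min ki x * (k * ki * x ^ (2-1)) ≤ s * (k + ki*x)^2  (with k = s*s, ki*x = r*r)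
    have key : r * (s * s * (r * r)) ≤ s * (s * s + r * r) ^ 2 := by
      have h1 : s * r^3 ≤ s^4 + 2*s^2*r^2 + r^4 := by
        nlinarith [sq_nonneg (s*r - r^2), sq_nonneg (s*s), sq_nonneg s]
      nlinarith [mul_le_mul_of_nonneg_left h1 hs0.le]
    calc min (ki:ℝ) x * ((k:ℝ) * ki * x ^ (2-1))
        = min (ki:ℝ) x * (s * s * (r * r)) := by
          rw [hs, hr]; ring_nf
      _ ≤ r * (s * s * (r * r)) := by
          apply mul_le_mul_of_nonneg_right hAr; positivity
      _ ≤ s * (s * s + r * r) ^ 2 := key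
      _ = s * ((k:ℝ) + ki * x) ^ 2 := by rw [hs, hr]
end

section
/- Let P ⊂ ℝ^d be finite, 𝒜 a finite set of centers, and 𝒮 another finite set of centers. Fix a cluster C_j ⊆ P assigned to a single center a ∈ 𝒜. Suppose every p ∈ C_j satisfies ‖p − a‖² ≤ 2·‖p' − a‖² for all p' ∈ C_j (points have comparable costs) and that min_{s∈𝒮} ‖p − s‖² ≥ 8·‖p − a‖² for all p ∈ C_j. Let q = (1/|C_j|)·Σ_{p'∈C_j} min_{s∈𝒮}‖p' − s‖². Then for every p ∈ C_j: |min_{s∈𝒮}‖p − s‖² − q| ≤ γ·√(min_{s∈𝒮}‖p − s‖²)·‖p − a‖ for some absolute constant γ. -/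
/-!
The square root of the cost, `x ↦ min_{s ∈ S} ‖x - s‖`, is 1-Lipschitz. Two points of the cluster
are within `3‖p - a‖` of each other, because all distances to `a` are comparable, and
`‖p - a‖ ≤ √cost p` by the separation hypothesis. Factoring
`cost p - cost p' = (√cost p - √cost p') (√cost p + √cost p')` then bounds every
`|cost p - cost p'|` by `15 √(cost p) ‖p - a‖`, and averaging over `p'` preserves the bound.
-/

open Finset

lemma Finset.abs_sub_average_le {ι : Type*} {s : Finset ι} (hs : s.Nonempty) {f : ι → ℝ} {x B : ℝ}
    (h : ∀ i ∈ s, |x - f i| ≤ B) : |x - (1 / (#s : ℝ)) * ∑ i ∈ s, f i| ≤ B := by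
  have hcard : (0 : ℝ) < #s := by exact_mod_cast hs.card_pos
  have hupper : ∑ i ∈ s, f i ≤ #s * (x + B) := by
    rw [← nsmul_eq_mul]
    exact s.sum_le_card_nsmul f (x + B) fun i hi => by linarith [(abs_le.mp (h i hi)).1]
  have hlower : #s * (x - B) ≤ ∑ i ∈ s, f i := by
    rw [← nsmul_eq_mul]
    exact s.card_nsmul_le_sum f (x - B) fun i hi => by linarith [(abs_le.mp (h i hi)).2]
  have hlo : x - B ≤ (∑ i ∈ s, f i) / #s := (le_div_iff₀ hcard).2 (by linarith)
  have hhi : (∑ i ∈ s, f i) / #s ≤ x + B := (div_le_iff₀ hcard).2 (by linarith)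
  rw [one_div_mul_eq_div, abs_le]
  constructor <;> linarith

lemma abs_sq_sub_sq_le_of_abs_sub_le {t t' r : ℝ} (ht : 0 ≤ t) (ht' : 0 ≤ t')
    (h : |t - t'| ≤ r) : |t ^ 2 - t' ^ 2| ≤ r * (2 * t + r) := by
  have hsum : |t + t'| ≤ 2 * t + r := by
    rw [abs_of_nonneg (by positivity)]
    linarith [(abs_le.mp h).1]
  calc |t ^ 2 - t' ^ 2| = |t - t'| * |t + t'| := by rw [← abs_mul]; ring_nf
    _ ≤ r * (2 * t + r) := mul_le_mul h hsum (abs_nonneg _) ((abs_nonneg _).trans h)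

section KMeansCost

variable {E : Type*} [SeminormedAddCommGroup E] (S : Finset E) (hS : S.Nonempty)

noncomputable def kMeansCost (x : E) : ℝ := S.inf' hS fun s => ‖x - s‖ ^ 2

lemma kMeansCost_nonneg (x : E) : 0 ≤ kMeansCost S hS x :=
  le_inf' hS _ fun _ _ => by positivity

lemma sqrt_kMeansCost (x : E) : √(kMeansCost S hS x) = S.inf' hS fun s => ‖x - s‖ := by
  rw [kMeansCost, apply_inf'_eq_inf'_comp hS _ fun _ _ => Real.sqrt_monotone.map_min]
  exact inf'_congr hS rfl fun s _ => Real.sqrt_sq (norm_nonneg _)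

lemma sqrt_kMeansCost_le_add (x y : E) :
    √(kMeansCost S hS x) ≤ √(kMeansCost S hS y) + ‖x - y‖ := by
  rw [sqrt_kMeansCost, sqrt_kMeansCost]
  obtain ⟨s, hs, hmin⟩ := S.exists_mem_eq_inf' hS fun s => ‖y - s‖
  calc S.inf' hS (fun s => ‖x - s‖) ≤ ‖x - s‖ := inf'_le _ hs
    _ ≤ ‖y - s‖ + ‖x - y‖ := by
      rw [add_comm]; exact norm_sub_le_norm_sub_add_norm_sub x y s
    _ = S.inf' hS (fun s => ‖y - s‖) + ‖x - y‖ := by rw [hmin]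

lemma abs_sqrt_kMeansCost_sub_le (x y : E) :
    |√(kMeansCost S hS x) - √(kMeansCost S hS y)| ≤ ‖x - y‖ :=
  abs_sub_le_iff.mpr ⟨by linarith [sqrt_kMeansCost_le_add S hS x y],
    by linarith [sqrt_kMeansCost_le_add S hS y x, norm_sub_rev x y]⟩

lemma abs_kMeansCost_sub_le (x y : E) :
    |kMeansCost S hS x - kMeansCost S hS y| ≤
      ‖x - y‖ * (2 * √(kMeansCost S hS x) + ‖x - y‖) := by
  have h := abs_sq_sub_sq_le_of_abs_sub_le (Real.sqrt_nonneg _) (Real.sqrt_nonneg _)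
    (abs_sqrt_kMeansCost_sub_le S hS x y)
  rwa [Real.sq_sqrt (kMeansCost_nonneg S hS x), Real.sq_sqrt (kMeansCost_nonneg S hS y)] at h

end KMeansCost

theorem stmt_10 :
    ∃ γ : ℝ, 0 < γ ∧
      ∀ (d : ℕ) (Cj S : Finset (EuclideanSpace ℝ (Fin d)))
        (hC : Cj.Nonempty) (hS : S.Nonempty) (a : EuclideanSpace ℝ (Fin d)),
        (∀ p ∈ Cj, ∀ p' ∈ Cj, ‖p - a‖ ^ 2 ≤ 2 * ‖p' - a‖ ^ 2) →
        (∀ p ∈ Cj, 8 * ‖p - a‖ ^ 2 ≤ S.inf' hS (fun s => ‖p - s‖ ^ 2)) →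
        ∀ p ∈ Cj,
          |S.inf' hS (fun s => ‖p - s‖ ^ 2) -
              (1 / (Cj.card : ℝ)) * ∑ p' ∈ Cj, S.inf' hS (fun s => ‖p' - s‖ ^ 2)| ≤
            γ * Real.sqrt (S.inf' hS (fun s => ‖p - s‖ ^ 2)) * ‖p - a‖ := by
  refine ⟨15, by norm_num, fun d Cj S hC hS a hcomp hsep p hp => ?_⟩
  change |kMeansCost S hS p - (1 / (#Cj : ℝ)) * ∑ p' ∈ Cj, kMeansCost S hS p'| ≤
    15 * √(kMeansCost S hS p) * ‖p - a‖
  refine Cj.abs_sub_average_le hC fun p' hp' => ?_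
  set t := √(kMeansCost S hS p)
  have hpa_le : ‖p - a‖ ≤ t := by
    have hsep_p : 8 * ‖p - a‖ ^ 2 ≤ t ^ 2 := by
      rw [Real.sq_sqrt (kMeansCost_nonneg S hS p)]; exact hsep p hp
    nlinarith [norm_nonneg (p - a), Real.sqrt_nonneg (kMeansCost S hS p)]
  have hp'a_le : ‖p' - a‖ ≤ 2 * ‖p - a‖ := by
    nlinarith [hcomp p' hp' p hp, norm_nonneg (p' - a), norm_nonneg (p - a)]
  have hpp'_le : ‖p - p'‖ ≤ 3 * ‖p - a‖ := by
    linarith [norm_sub_le_norm_sub_add_norm_sub p a p', norm_sub_rev a p']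
  calc |kMeansCost S hS p - kMeansCost S hS p'| ≤ ‖p - p'‖ * (2 * t + ‖p - p'‖) :=
        abs_kMeansCost_sub_le S hS p p'
    _ ≤ 3 * ‖p - a‖ * (2 * t + 3 * ‖p - a‖) := by gcongr
    _ ≤ 15 * t * ‖p - a‖ := by nlinarith [norm_nonneg (p - a)]
end
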